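/- Let R_ma(t) denote the number of reduced 3×3 magic squares whose magic sum equals t. Then for every integer t ≥ 1: R_ma(t) = 0 if t is not divisible by 3; 3·R_ma(t) = 4(t−12) if t ≡ 0 (mod 18); 3·R_ma(t) = 4(t−3) if t ≡ 3 or 15 (mod 18); 3·R_ma(t) = 4(t−6) if t ≡ 6 or 12 (mod 18); and 3·R_ma(t) = 4(t−9) if t ≡ 9 (mod 18). -/

import Mathlib

/-- A 3×3 magic square with magic sum `s`: all nine entries distinct, all row
sums, column sums, the main diagonal sum and the antidiagonal sum equal `s`. -/
def IsMagicSqSum (x : Matrix (Fin 3) (Fin 3) ℤ) (s : ℤ) : Prop :=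
  (Function.Injective fun p : Fin 3 × Fin 3 => x p.1 p.2) ∧
  (∀ i, ∑ j, x i j = s) ∧ (∀ j, ∑ i, x i j = s) ∧
  x 0 0 + x 1 1 + x 2 2 = s ∧ x 0 2 + x 1 1 + x 2 0 = s

/-- `Rma t` = number of reduced 3×3 magic squares (nonnegative entries, minimum
entry 0) whose magic sum equals t. -/
noncomputable def Rma (t : ℕ) : ℕ :=
  {x : Matrix (Fin 3) (Fin 3) ℤ |
    IsMagicSqSum x (t : ℤ) ∧ (∀ i j, 0 ≤ x i j) ∧ (∃ i j, x i j = 0)}.ncard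

/-!
A magic square with magic sum `s` has its centre `c` at one third of `s`, and the row, column
and diagonal equations leave two free parameters: the square is `c` plus
`[-a, a + b, -b; a - b, 0, b - a; b, -a - b, a]`. Its least entry is `c - |a| - |b|`, and its
entries are distinct iff `a, b ≠ 0`, `|a| ≠ |b|` and neither of `|a|, |b|` is twice the other.
Hence reduced squares with sum `3c` are the lattice points of the diamond `|a| + |b| = c` off the
axes (there are `4 (c - 1)`), less the four with `|a| = |b|` when `2 ∣ c` and the eight with
ratio `1 : 2` when `3 ∣ c`.
-/

def magicSq (c : ℤ) (p : ℤ × ℤ) : Matrix (Fin 3) (Fin 3) ℤ :=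
  !![c - p.1, c + p.1 + p.2, c - p.2;
     c + p.1 - p.2, c, c - p.1 + p.2;
     c + p.2, c - p.1 - p.2, c + p.1]

def Admissible (p : ℤ × ℤ) : Prop :=
  p.1 ≠ 0 ∧ p.2 ≠ 0 ∧ |p.1| ≠ |p.2| ∧ |p.2| ≠ 2 * |p.1| ∧ |p.1| ≠ 2 * |p.2|

def IsReducedSq (x : Matrix (Fin 3) (Fin 3) ℤ) : Prop :=
  (∀ i j, 0 ≤ x i j) ∧ ∃ i j, x i j = 0

lemma magicSq_injective (c : ℤ) : Function.Injective (magicSq c) := by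
  intro p q h
  have h1 := congrFun (congrFun h 2) 2
  have h2 := congrFun (congrFun h 2) 0
  simp only [magicSq, Matrix.of_apply, Matrix.cons_val, add_right_inj] at h1 h2
  exact Prod.ext h1 h2

lemma IsMagicSqSum.eq_magicSq {x : Matrix (Fin 3) (Fin 3) ℤ} {s : ℤ} (h : IsMagicSqSum x s) :
    s = 3 * x 1 1 ∧ x = magicSq (x 1 1) (x 1 1 - x 0 0, x 1 1 - x 0 2) := by
  obtain ⟨-, hrow, hcol, hdiag, hanti⟩ := h
  have r0 := hrow 0; have r1 := hrow 1; have r2 := hrow 2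
  have c0 := hcol 0; have c1 := hcol 1; have c2 := hcol 2
  simp only [Fin.sum_univ_three] at r0 r1 r2 c0 c1 c2
  refine ⟨by omega, ?_⟩
  ext i j
  fin_cases i <;> fin_cases j <;>
    simp only [magicSq, Matrix.of_apply, Matrix.cons_val', Matrix.cons_val,
      Matrix.cons_val_fin_one, Fin.isValue, Fin.zero_eta, Fin.mk_one, Fin.reduceFinMk] <;> omega

lemma injective_magicSq_iff (c : ℤ) (p : ℤ × ℤ) :
    (Function.Injective fun q : Fin 3 × Fin 3 => magicSq c p q.1 q.2) ↔ Admissible p := by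
  obtain ⟨a, b⟩ := p
  simp only [Admissible, abs_eq_max_neg]
  constructor
  · intro hinj
    have hne : ∀ q r : Fin 3 × Fin 3, q ≠ r →
        magicSq c (a, b) q.1 q.2 ≠ magicSq c (a, b) r.1 r.2 := fun _ _ => hinj.ne
    have := hne (0, 0) (1, 1) (by decide)
    have := hne (0, 2) (1, 1) (by decide)
    have := hne (0, 0) (0, 2) (by decide)
    have := hne (0, 0) (2, 0) (by decide)
    have := hne (1, 0) (0, 0) (by decide)
    have := hne (0, 1) (0, 0) (by decide)
    have := hne (1, 2) (0, 2) (by decide)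
    have := hne (2, 1) (2, 0) (by decide)
    simp only [magicSq, Matrix.of_apply, Matrix.cons_val', Matrix.cons_val,
      Matrix.cons_val_fin_one, Fin.isValue] at *
    omega
  · intro h q r hqr
    fin_cases q <;> fin_cases r <;>
      simp only [Prod.mk.injEq, magicSq, Matrix.of_apply, Matrix.cons_val', Matrix.cons_val,
        Matrix.cons_val_fin_one, Fin.isValue, Fin.zero_eta, Fin.mk_one,
        Fin.reduceFinMk] at hqr ⊢ <;> omega

lemma isReducedSq_magicSq_iff (c : ℤ) (p : ℤ × ℤ) :
    IsReducedSq (magicSq c p) ↔ |p.1| + |p.2| = c := by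
  obtain ⟨a, b⟩ := p
  simp only [IsReducedSq, Fin.forall_fin_succ, Fin.exists_fin_succ, IsEmpty.forall_iff,
    IsEmpty.exists_iff, or_false, and_true, magicSq, Matrix.of_apply, Matrix.cons_val',
    Matrix.cons_val, Matrix.cons_val_zero, Matrix.cons_val_one, Matrix.cons_val_fin_one,
    Fin.isValue, Fin.succ_zero_eq_one, Fin.succ_one_eq_two, abs_eq_max_neg]
  omega

lemma isMagicSqSum_magicSq_iff (c : ℤ) (p : ℤ × ℤ) :
    IsMagicSqSum (magicSq c p) (3 * c) ↔ Admissible p := by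
  rw [← injective_magicSq_iff c p]
  refine ⟨And.left, fun hinj => ⟨hinj, ?rows, ?cols, ?diag, ?anti⟩⟩ <;>
    simp only [Fin.forall_fin_succ, IsEmpty.forall_iff, and_true, Fin.sum_univ_three, magicSq,
      Matrix.of_apply, Matrix.cons_val', Matrix.cons_val, Matrix.cons_val_zero, Matrix.cons_val_one,
      Matrix.cons_val_fin_one, Fin.isValue, Fin.succ_zero_eq_one, Fin.succ_one_eq_two]
  case rows | cols => exact ⟨by ring, by ring, by ring⟩
  all_goals ring

lemma setOf_magic_reduced_eq_image (c : ℤ) :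
    {x | IsMagicSqSum x (3 * c) ∧ IsReducedSq x} =
      magicSq c '' {p | Admissible p ∧ |p.1| + |p.2| = c} := by
  ext x
  constructor
  · rintro ⟨hx, hred⟩
    obtain ⟨hs, hxeq⟩ := hx.eq_magicSq
    obtain rfl : x 1 1 = c := by omega
    rw [hxeq] at hx hred
    exact ⟨_, ⟨(injective_magicSq_iff _ _).1 hx.1, (isReducedSq_magicSq_iff _ _).1 hred⟩,
      hxeq.symm⟩
  · rintro ⟨p, ⟨hadm, hsum⟩, rfl⟩
    exact ⟨(isMagicSqSum_magicSq_iff c p).2 hadm, (isReducedSq_magicSq_iff c p).2 hsum⟩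

lemma Finset.card_filter_mul_eq (s : Finset ℤ) {k : ℤ} (hk : k ≠ 0) (m : ℤ) :
    (s.filter (fun u => k * u = m)).card = if k ∣ m ∧ m / k ∈ s then 1 else 0 := by
  split_ifs with h
  · obtain ⟨⟨d, rfl⟩, hd⟩ := h
    rw [Int.mul_ediv_cancel_left _ hk] at hd
    rw [Finset.card_eq_one]
    exact ⟨d, by ext u; simpa [hk] using fun h : u = d => h ▸ hd⟩
  · rw [Finset.card_eq_zero, Finset.filter_eq_empty_iff]
    rintro u hu rfl
    exact h ⟨dvd_mul_right k u, by rwa [Int.mul_ediv_cancel_left _ hk]⟩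

/-- The values `u = |a|` of the admissible `(a, b)` with `|a| + |b| = c`: the three excluded
relations are `|a| = |b|`, `|b| = 2 |a|` and `|a| = 2 |b|`. -/
noncomputable def quadrantParams (c : ℤ) : Finset ℤ :=
  (Finset.Icc 1 (c - 1)).filter fun u => ¬(2 * u = c ∨ 3 * u = c ∨ 3 * u = 2 * c)

lemma card_quadrantParams {c : ℤ} (hc : 1 ≤ c) :
    ((quadrantParams c).card : ℤ) =
      c - 1 - (if 2 ∣ c then 1 else 0) - (if 3 ∣ c then 2 else 0) := by
  have hsplit := Finset.card_filter_add_card_filter_not (s := Finset.Icc 1 (c - 1))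
    (p := fun u => 2 * u = c ∨ 3 * u = c ∨ 3 * u = 2 * c)
  rw [Finset.filter_or,
    Finset.card_union_of_disjoint (Finset.disjoint_filter.2 fun _ _ => by omega), Finset.filter_or,
    Finset.card_union_of_disjoint (Finset.disjoint_filter.2 fun _ _ => by omega),
    Finset.card_filter_mul_eq _ two_ne_zero, Finset.card_filter_mul_eq _ three_ne_zero,
    Finset.card_filter_mul_eq _ three_ne_zero, Int.card_Icc] at hsplit
  unfold quadrantParams
  simp only [Finset.mem_Icc] at hsplit
  split_ifs at hsplit ⊢ <;> omega

noncomputable def reducedParams (c : ℤ) : Finset (ℤ × ℤ) :=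
  ((({1, -1} : Finset ℤ) ×ˢ ({1, -1} : Finset ℤ)) ×ˢ quadrantParams c).image
    fun e => (e.1.1 * e.2, e.1.2 * (c - e.2))

lemma mem_reducedParams {c : ℤ} {p : ℤ × ℤ} :
    p ∈ reducedParams c ↔ Admissible p ∧ |p.1| + |p.2| = c := by
  obtain ⟨a, b⟩ := p
  simp only [reducedParams, quadrantParams, Admissible, Finset.mem_image, Finset.mem_product,
    Finset.mem_insert, Finset.mem_singleton, Finset.mem_filter, Finset.mem_Icc, Prod.exists,
    Prod.mk.injEq]
  constructor
  · rintro ⟨ε, δ, u, ⟨⟨hε | hε, hδ | hδ⟩, hu⟩, rfl, rfl⟩ <;> subst hε hδ <;>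
      simp only [abs_eq_max_neg] <;> omega
  · rintro ⟨hadm, hsum⟩
    have hsign (x : ℤ) (hx : x ≠ 0) : x.sign = 1 ∨ x.sign = -1 := by
      rcases hx.lt_or_gt with h | h
      · exact Or.inr (Int.sign_eq_neg_one_of_neg h)
      · exact Or.inl (Int.sign_eq_one_of_pos h)
    refine ⟨a.sign, b.sign, |a|, ⟨⟨hsign a hadm.1, hsign b hadm.2.1⟩, ?_⟩, a.sign_mul_abs,
      ?_⟩
    · simp only [abs_eq_max_neg] at hadm hsum ⊢
      omega
    · rw [← hsum, add_sub_cancel_left, b.sign_mul_abs]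

lemma card_reducedParams (c : ℤ) : (reducedParams c).card = 4 * (quadrantParams c).card := by
  rw [reducedParams, Finset.card_image_of_injOn, Finset.card_product, Finset.card_product]
  · rfl
  · rintro ⟨⟨ε, δ⟩, u⟩ h ⟨⟨ε', δ'⟩, u'⟩ h' heq
    simp only [Finset.coe_product, Set.mem_prod, Finset.mem_coe, Finset.mem_insert,
      Finset.mem_singleton, quadrantParams, Finset.mem_filter, Finset.mem_Icc,
      Prod.mk.injEq] at h h' heq ⊢
    obtain ⟨⟨rfl | rfl, rfl | rfl⟩, hu, -⟩ := h <;>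
      obtain ⟨⟨rfl | rfl, rfl | rfl⟩, hu', -⟩ := h' <;> omega

lemma Rma_three_mul (c : ℕ) : Rma (3 * c) = (reducedParams c).card := by
  change {x | IsMagicSqSum x ((3 * c : ℕ) : ℤ) ∧ IsReducedSq x}.ncard = _
  rw [Nat.cast_mul, Nat.cast_ofNat, setOf_magic_reduced_eq_image,
    Set.ncard_image_of_injective _ (magicSq_injective _), ← Set.ncard_coe_finset]
  congr
  ext p
  simp [mem_reducedParams]

lemma Rma_eq_zero_of_not_dvd {t : ℕ} (ht : ¬3 ∣ t) : Rma t = 0 := by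
  rw [Rma]
  convert Set.ncard_empty (Matrix (Fin 3) (Fin 3) ℤ)
  exact Set.eq_empty_of_forall_notMem fun x (hx : IsMagicSqSum x t ∧ _) =>
    ht (Int.natCast_dvd_natCast.1 ⟨_, hx.1.eq_magicSq.1⟩)

theorem reduced_magic_affine_count (t : ℕ) (ht : 1 ≤ t) :
    (¬ (3 ∣ t) → Rma t = 0) ∧
    (t % 18 = 0 → 3 * (Rma t : ℤ) = 4 * ((t : ℤ) - 12)) ∧
    ((t % 18 = 3 ∨ t % 18 = 15) → 3 * (Rma t : ℤ) = 4 * ((t : ℤ) - 3)) ∧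
    ((t % 18 = 6 ∨ t % 18 = 12) → 3 * (Rma t : ℤ) = 4 * ((t : ℤ) - 6)) ∧
    (t % 18 = 9 → 3 * (Rma t : ℤ) = 4 * ((t : ℤ) - 9)) := by
  by_cases h3 : 3 ∣ t
  · obtain ⟨c, rfl⟩ := h3
    have hcount : (Rma (3 * c) : ℤ) = 4 * ((c : ℤ) - 1 - (if 2 ∣ (c : ℤ) then 1 else 0) -
        (if 3 ∣ (c : ℤ) then 2 else 0)) := by
      rw [Rma_three_mul, card_reducedParams, Nat.cast_mul, card_quadrantParams (by omega)]
      rfl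
    refine ⟨fun h => absurd (dvd_mul_right 3 c) h, ?_, ?_, ?_, ?_⟩ <;> intro hmod <;>
      rw [hcount] <;> push_cast <;> split_ifs <;> omega
  · refine ⟨fun _ => Rma_eq_zero_of_not_dvd h3, ?_, ?_, ?_, ?_⟩ <;> intro <;> omega
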